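/- arXiv:2111.09765 — 3 statements merged into one kernel-verified Lean document; each statement's English description precedes it below -/
import Mathlib

section
/- Let E ⊆ ℝⁿ be a bounded convex set with nonempty interior, x ∈ ℝⁿ, and suppose the line l(t) = x + t·eₙ meets E in two points p and q. Let P : ℝⁿ → ℝ^{n-1} be the projection forgetting the last coordinate. Then |pₙ − qₙ| · Vol_{n-1}(P E) ≤ C(n) · Vol(E) for a dimensional constant C(n). -/
open Set MeasureTheory

/-!
For `z ∈ E`, the midpoints of `p, z` and of `q, z` lie in `E` above the same base point, so by
convexity `E` contains a vertical segment of length `|pₙ - qₙ| / 2` above every point of the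
homothetic copy `½ (P p + P E)` of `P E`, whose volume is `2^{-(n-1)} Vol_{n-1}(P E)`.
Integrating the lengths of the vertical fibres gives the bound with `C(n) = 2ⁿ`.
-/

open Measure in
theorem lintegral_measure_preimage_mk_le_prod {α β : Type*} [MeasurableSpace α]
    [MeasurableSpace β] (μ : Measure α) (ν : Measure β) [SFinite ν] (s : Set (α × β)) :
    ∫⁻ x, ν (Prod.mk x ⁻¹' s) ∂μ ≤ μ.prod ν s := by
  rw [← measure_toMeasurable s, prod_apply (measurableSet_toMeasurable _ _)]
  exact lintegral_mono fun x ↦ measure_mono <| preimage_mono <| subset_toMeasurable _ _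

theorem mul_measure_le_prod_of_le_measure_preimage_mk {α β : Type*} [MeasurableSpace α]
    [MeasurableSpace β] {μ : Measure α} {ν : Measure β} [SFinite ν] {s : Set (α × β)}
    {A : Set α} (hA : NullMeasurableSet A μ) {c : ENNReal}
    (hc : ∀ x ∈ A, c ≤ ν (Prod.mk x ⁻¹' s)) : c * μ A ≤ μ.prod ν s :=
  calc c * μ A = ∫⁻ _ in A, c ∂μ := (setLIntegral_const _ _).symm
    _ ≤ ∫⁻ x in A, ν (Prod.mk x ⁻¹' s) ∂μ :=
      lintegral_mono_ae <| (ae_restrict_mem₀ hA).mono hc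
    _ ≤ ∫⁻ x, ν (Prod.mk x ⁻¹' s) ∂μ := setLIntegral_le_lintegral _ _
    _ ≤ μ.prod ν s := lintegral_measure_preimage_mk_le_prod μ ν s

theorem Convex.ofReal_abs_sub_le_volume_preimage_mk {V : Type*} [AddCommGroup V] [Module ℝ V]
    {E : Set (V × ℝ)} (hE : Convex ℝ E) {x : V} {s t : ℝ} (hs : (x, s) ∈ E)
    (ht : (x, t) ∈ E) :
    ENNReal.ofReal |s - t| ≤ volume (Prod.mk x ⁻¹' E) := by
  have hsub : uIcc t s ⊆ Prod.mk x ⁻¹' E := by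
    rw [← segment_eq_uIcc, ← image_subset_iff, Prod.image_mk_segment_right]
    exact hE.segment_subset ht hs
  simpa only [Real.volume_interval] using measure_mono (μ := volume) hsub

theorem Convex.half_abs_sub_le_volume_preimage_mk_midpoint {V : Type*} [AddCommGroup V]
    [Module ℝ V] {E : Set (V × ℝ)} (hE : Convex ℝ E) {p q z : V × ℝ} (hp : p ∈ E)
    (hq : q ∈ E) (hz : z ∈ E) (hpq : p.1 = q.1) :
    ENNReal.ofReal (|p.2 - q.2| / 2) ≤ volume (Prod.mk (midpoint ℝ p.1 z.1) ⁻¹' E) := by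
  have hpz : (midpoint ℝ p.1 z.1, midpoint ℝ p.2 z.2) ∈ E := hE.midpoint_mem hp hz
  have hqz : (midpoint ℝ p.1 z.1, midpoint ℝ q.2 z.2) ∈ E := hpq ▸ hE.midpoint_mem hq hz
  have hhalf : midpoint ℝ p.2 z.2 - midpoint ℝ q.2 z.2 = (p.2 - q.2) / 2 := by
    simp only [midpoint_eq_smul_add, smul_eq_mul, invOf_eq_inv]; ring
  simpa only [hhalf, abs_div, abs_two] using hE.ofReal_abs_sub_le_volume_preimage_mk hpz hqz

open Module in
theorem Convex.ofReal_abs_sub_mul_measure_image_fst_le {V : Type*} [NormedAddCommGroup V]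
    [NormedSpace ℝ V] [MeasurableSpace V] [BorelSpace V] [FiniteDimensional ℝ V]
    (μ : Measure V) [μ.IsAddHaarMeasure] {E : Set (V × ℝ)} (hE : Convex ℝ E) {p q : V × ℝ}
    (hp : p ∈ E) (hq : q ∈ E) (hpq : p.1 = q.1) :
    ENNReal.ofReal (|p.2 - q.2| / 2 ^ (finrank ℝ V + 1)) * μ (Prod.fst '' E) ≤
      μ.prod volume E := by
  set A := AffineMap.homothety p.1 (2⁻¹ : ℝ) '' (Prod.fst '' E)
  have hA : Convex ℝ A := (hE.linear_image (LinearMap.fst ℝ V ℝ)).affine_image _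
  have hμA : μ A = ENNReal.ofReal (2⁻¹ ^ finrank ℝ V) * μ (Prod.fst '' E) := by
    rw [Measure.addHaar_image_homothety, abs_of_pos (by norm_num)]
  have hfiber : ∀ x ∈ A, ENNReal.ofReal (|p.2 - q.2| / 2) ≤ volume (Prod.mk x ⁻¹' E) := by
    rintro _ ⟨_, ⟨z, hz, rfl⟩, rfl⟩
    exact hE.half_abs_sub_le_volume_preimage_mk_midpoint hp hq hz hpq
  have hconst :
      |p.2 - q.2| / 2 ^ (finrank ℝ V + 1) = |p.2 - q.2| / 2 * 2⁻¹ ^ finrank ℝ V := by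
    rw [pow_succ, inv_pow]; field_simp
  calc ENNReal.ofReal (|p.2 - q.2| / 2 ^ (finrank ℝ V + 1)) * μ (Prod.fst '' E)
      = ENNReal.ofReal (|p.2 - q.2| / 2) * μ A := by
        rw [hμA, ← mul_assoc, ← ENNReal.ofReal_mul (by positivity), hconst]
    _ ≤ μ.prod volume E :=
        mul_measure_le_prod_of_le_measure_preimage_mk (hA.nullMeasurableSet μ) hfiber

/-- Lemma 2.2(i): if a bounded convex set `E ⊆ ℝⁿ` with nonempty interior meets the
vertical line through `x` at two points `p, q`, then
`|pₙ − qₙ| · Vol_{n-1}(P E) ≤ C(n) · Vol(E)` for a dimensional constant `C(n)`,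
where `P` is the projection forgetting the last coordinate. -/
theorem stmt1 (d : ℕ) :
    ∃ C : ℝ, 0 < C ∧
      ∀ E : Set (EuclideanSpace ℝ (Fin d) × ℝ), Convex ℝ E → Bornology.IsBounded E →
        (interior E).Nonempty →
        ∀ p ∈ E, ∀ q ∈ E, p.1 = q.1 →
          |p.2 - q.2| * (volume (Prod.fst '' E)).toReal ≤ C * (volume E).toReal := by
  refine ⟨2 ^ (d + 1), by positivity, fun E hE hEb _ p hp q hq hpq ↦ ?_⟩
  have hENN := hE.ofReal_abs_sub_mul_measure_image_fst_le volume hp hq hpq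
  rw [finrank_euclideanSpace_fin, ← Measure.volume_eq_prod] at hENN
  have hreal := ENNReal.toReal_mono hEb.measure_lt_top.ne hENN
  rw [ENNReal.toReal_mul, ENNReal.toReal_ofReal (by positivity), div_mul_eq_mul_div,
    div_le_iff₀ (by positivity)] at hreal
  linarith
end

section
/- Let Ω ⊆ ℝⁿ be a bounded convex open set and u a convex function on Ω with Monge–Ampère measure det D²u ≥ λ > 0 on Ω. Then Vol(Ω) ≤ C(λ, n) · (sup_Ω |u| )^{n/2}. -/
open Metric Set MeasureTheory
open scoped RealInnerProductSpace ENNReal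

/-- The subdifferential of a function `u` on a set `s` at a point `y`. -/
def subDiff {V : Type*} [NormedAddCommGroup V] [InnerProductSpace ℝ V]
    (s : Set V) (u : V → ℝ) (y : V) : Set V :=
  {p | ∀ x ∈ s, u y + ⟪p, x - y⟫ ≤ u x}

/-- The Monge–Ampère (Aleksandrov) measure of `u` on `s`, evaluated on a set `A`:
the Lebesgue measure of the image of `A ∩ s` under the subdifferential map. -/
noncomputable def maMeasure {n : ℕ} (s : Set (EuclideanSpace ℝ (Fin n)))
    (u : EuclideanSpace ℝ (Fin n) → ℝ) (A : Set (EuclideanSpace ℝ (Fin n))) : ℝ≥0∞ :=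
  volume (⋃ x ∈ A ∩ s, subDiff s u x)

open scoped Matrix Pointwise

/-!
Choose vertices `w 0, …, w n` in `closure Ω` spanning a simplex of maximal volume, i.e. maximising
`δ = |det (w (i+1) - w 0)|`. By Cramer's rule and maximality every point of `Ω` is
`w 0 + ∑ cⱼ (w (j+1) - w 0)` with `|cⱼ| ≤ 1`, so `Vol Ω ≤ 2ⁿ δ`.

Let `g` be the centroid of the vertices and `A = g + (Ω - g) / 2 ⊆ Ω`. If `p` is a subgradient at
`x = g + (ω - g) / 2`, testing it at the midpoint of `ω` and `y ∈ Ω`, which is `x + (y - g) / 2`,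
gives `⟪p, y - g⟫ ≤ 4M`. As `∑ ⟪p, w i - g⟫ = 0`, each `⟪p, w (i+1) - w 0⟫` is then at most
`4(n+1)M` in absolute value, so the subgradient image of `A` has volume at most
`(8(n+1)M)ⁿ / δ`. Hence `λ 2⁻ⁿ Vol Ω ≤ (8(n+1)M)ⁿ / δ`, and multiplying by `Vol Ω ≤ 2ⁿ δ`
eliminates `δ`.
-/

lemma EuclideanSpace.volume_setOf_abs_le (ι : Type*) [Fintype ι] (β : ℝ) :
    volume {y : EuclideanSpace ℝ ι | ∀ i, |y i| ≤ β}
      = ENNReal.ofReal (2 * β) ^ Fintype.card ι := by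
  have hset : {y : EuclideanSpace ℝ ι | ∀ i, |y i| ≤ β}
      = (MeasurableEquiv.toLp 2 (ι → ℝ)).symm ⁻¹' univ.pi fun _ => Icc (-β) β := by
    ext y
    simp [abs_le, Pi.le_def, forall_and]
  rw [hset, (EuclideanSpace.volume_preserving_symm_measurableEquiv_toLp ι).measure_preimage
    (MeasurableSet.univ_pi fun _ => measurableSet_Icc).nullMeasurableSet, volume_pi_pi]
  simp [Real.volume_Icc, two_mul]

lemma abs_sub_le_card_mul_of_sum_eq_zero {ι : Type*} [Fintype ι] {t : ι → ℝ} {a : ℝ}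
    (hsum : ∑ i, t i = 0) (ht : ∀ i, t i ≤ a) (i j : ι) :
    |t i - t j| ≤ Fintype.card ι * a := by
  classical
  have hlow : ∀ k, -((Fintype.card ι - 1) * a) ≤ t k := by
    intro k
    have hrest : ∑ l ∈ Finset.univ.erase k, t l ≤ (Fintype.card ι - 1) * a := by
      calc ∑ l ∈ Finset.univ.erase k, t l ≤ (Finset.univ.erase k).card • a :=
            Finset.sum_le_card_nsmul _ _ _ fun l _ => ht l
        _ = (Fintype.card ι - 1) * a := by
            rw [Finset.card_erase_of_mem (Finset.mem_univ k), nsmul_eq_mul, Finset.card_univ,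
              Nat.cast_pred (Fintype.card_pos_iff.2 ⟨k⟩)]
    linarith [Finset.add_sum_erase Finset.univ t (Finset.mem_univ k)]
  rw [abs_sub_le_iff]
  constructor <;> linarith [ht i, ht j, hlow i, hlow j]

lemma Convex.image_homothety_interior_subset {E : Type*} [NormedAddCommGroup E]
    [NormedSpace ℝ E] {s : Set E} (hs : Convex ℝ s) {g : E} (hg : g ∈ closure s) {r : ℝ}
    (hr₀ : 0 < r) (hr₁ : r ≤ 1) :
    AffineMap.homothety g r '' interior s ⊆ interior s := by
  rintro _ ⟨x, hx, rfl⟩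
  convert hs.combo_closure_interior_mem_interior hg hx (sub_nonneg.2 hr₁) hr₀ (by ring) using 1
  simp only [AffineMap.homothety_apply, vsub_eq_sub, vadd_eq_add, smul_sub, sub_smul, one_smul]
  abel

lemma sum_sub_centroid_eq_zero {ι V : Type*} [Fintype ι] [Nonempty ι] [AddCommGroup V]
    [Module ℝ V] (w : ι → V) : ∑ i, (w i - Finset.univ.centroid ℝ w) = 0 := by
  rw [Finset.centroid_eq_centerMass _ Finset.univ_nonempty, Finset.centerMass,
    Finset.sum_centroidWeights_eq_one_of_nonempty _ _ Finset.univ_nonempty, inv_one, one_smul,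
    Finset.sum_sub_distrib, Finset.sum_const, Finset.card_univ, ← Nat.cast_smul_eq_nsmul ℝ,
    Finset.smul_sum, sub_eq_zero]
  simp [Finset.centroidWeights_apply, smul_smul]

lemma Convex.centroid_mem {ι V : Type*} [Fintype ι] [Nonempty ι] [AddCommGroup V] [Module ℝ V]
    {s : Set V} (hs : Convex ℝ s) {w : ι → V} (hw : ∀ i, w i ∈ s) :
    Finset.univ.centroid ℝ w ∈ s := by
  rw [Finset.centroid_eq_centerMass _ Finset.univ_nonempty]
  exact hs.centerMass_mem (fun i _ => by simp) (by simp) fun i _ => hw i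

lemma inner_sub_le_of_mem_subDiff_homothety {V : Type*} [NormedAddCommGroup V]
    [InnerProductSpace ℝ V] {Ω : Set V} {u : V → ℝ} {M : ℝ} (hΩ : Convex ℝ Ω)
    (hM : ∀ x ∈ Ω, |u x| ≤ M) {g ω p y : V} (hω : ω ∈ Ω)
    (hx : AffineMap.homothety g (2⁻¹ : ℝ) ω ∈ Ω)
    (hp : p ∈ subDiff Ω u (AffineMap.homothety g (2⁻¹ : ℝ) ω)) (hy : y ∈ closure Ω) :
    ⟪p, y - g⟫ ≤ 4 * M := by
  suffices h : ∀ y ∈ Ω, ⟪p, y - g⟫ ≤ 4 * M from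
    closure_minimal h (isClosed_le (by fun_prop : Continuous fun y => ⟪p, y - g⟫)
      continuous_const) hy
  intro y hy
  have hz : AffineMap.homothety ω (2⁻¹ : ℝ) y ∈ Ω := by
    simpa [AffineMap.homothety_eq_lineMap] using hΩ.lineMap_mem hω hy ⟨by norm_num, by norm_num⟩
  have hsupp := hp _ hz
  have hdiff : AffineMap.homothety ω (2⁻¹ : ℝ) y - AffineMap.homothety g (2⁻¹ : ℝ) ω
      = (2⁻¹ : ℝ) • (y - g) := by
    simp only [AffineMap.homothety_apply, vsub_eq_sub, vadd_eq_add, smul_sub]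
    module
  rw [hdiff, real_inner_smul_right] at hsupp
  linarith [(abs_le.1 (hM _ hx)).1, (abs_le.1 (hM _ hz)).2]

def edgeMatrix {n : ℕ} (w : Fin (n + 1) → EuclideanSpace ℝ (Fin n)) :
    Matrix (Fin n) (Fin n) ℝ :=
  Matrix.of fun i j => (w i.succ - w 0) j

section edgeMatrix

variable {n : ℕ}

lemma continuous_det_edgeMatrix :
    Continuous fun w : Fin (n + 1) → EuclideanSpace ℝ (Fin n) => (edgeMatrix w).det := by
  refine Continuous.matrix_det (continuous_matrix fun i j => ?_)
  simp only [edgeMatrix, Matrix.of_apply]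
  fun_prop

lemma edgeMatrix_update_succ (w : Fin (n + 1) → EuclideanSpace ℝ (Fin n)) (j : Fin n)
    (x : EuclideanSpace ℝ (Fin n)) :
    edgeMatrix (Function.update w j.succ x) = (edgeMatrix w).updateRow j (x - w 0).ofLp := by
  have h0 : Function.update w j.succ x 0 = w 0 :=
    Function.update_of_ne (Fin.succ_ne_zero j).symm ..
  ext i k
  rcases eq_or_ne i j with rfl | hij
  · simp [edgeMatrix, h0]
  · simp [edgeMatrix, h0, hij, Matrix.updateRow_ne]

lemma det_edgeMatrix_cons_add_smul_single (x : EuclideanSpace ℝ (Fin n)) (r : ℝ) :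
    (edgeMatrix (Fin.cons x fun j => x + r • EuclideanSpace.single j 1)).det = r ^ n := by
  have : edgeMatrix (Fin.cons x fun j => x + r • EuclideanSpace.single j 1) = r • 1 := by
    ext i j
    by_cases h : i = j <;> simp [edgeMatrix, h, eq_comm]
  simp [this]

lemma toEuclideanLin_edgeMatrix_apply (w : Fin (n + 1) → EuclideanSpace ℝ (Fin n))
    (p : EuclideanSpace ℝ (Fin n)) (i : Fin n) :
    Matrix.toEuclideanLin (edgeMatrix w) p i = ⟪p, w i.succ - w 0⟫ := by
  simp [Matrix.toLpLin_apply, Matrix.mulVec, dotProduct, edgeMatrix, PiLp.inner_apply, mul_comm]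

variable {K : Set (EuclideanSpace ℝ (Fin n))} {w : Fin (n + 1) → EuclideanSpace ℝ (Fin n)}

lemma exists_isMaxOn_abs_det_edgeMatrix (hK : IsCompact K) (hne : K.Nonempty) :
    ∃ w ∈ univ.pi fun _ => K, IsMaxOn (fun v => |(edgeMatrix v).det|) (univ.pi fun _ => K) w :=
  (isCompact_univ_pi fun _ => hK).exists_isMaxOn (univ_pi_nonempty_iff.2 fun _ => hne)
    continuous_det_edgeMatrix.abs.continuousOn

lemma abs_det_edgeMatrix_pos_of_isMaxOn
    (hmax : IsMaxOn (fun v => |(edgeMatrix v).det|) (univ.pi fun _ => K) w)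
    (hK : (interior K).Nonempty) : 0 < |(edgeMatrix w).det| := by
  obtain ⟨x, hx⟩ := hK
  obtain ⟨ρ, hρ, hball⟩ := Metric.isOpen_iff.1 isOpen_interior x hx
  have hv : (Fin.cons x fun j => x + (ρ / 2) • EuclideanSpace.single j 1 :
      Fin (n + 1) → EuclideanSpace ℝ (Fin n)) ∈ univ.pi fun _ => K := by
    refine fun i _ => interior_subset (Fin.cases hx (fun j => hball ?_) i)
    simp [norm_smul, abs_of_pos hρ, hρ]
  calc 0 < |(ρ / 2) ^ n| := by positivity
    _ ≤ |(edgeMatrix w).det| := by simpa [det_edgeMatrix_cons_add_smul_single] using hmax hv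

lemma sub_mem_image_cube_of_isMaxOn (hw : w ∈ univ.pi fun _ => K)
    (hmax : IsMaxOn (fun v => |(edgeMatrix v).det|) (univ.pi fun _ => K) w)
    (hdet : (edgeMatrix w).det ≠ 0) {x : EuclideanSpace ℝ (Fin n)} (hx : x ∈ K) :
    x - w 0 ∈ Matrix.toEuclideanLin (edgeMatrix w)ᵀ '' {y | ∀ i, |y i| ≤ 1} := by
  set U := edgeMatrix w
  -- Cramer's rule: the `j`-th coordinate of `x - w 0` in the basis of edges is a ratio of
  -- determinants, and the numerator is the edge determinant with `w j.succ` replaced by `x`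
  set c : Fin n → ℝ := U.det⁻¹ • Uᵀ.cramer (x - w 0).ofLp
  have hc : Uᵀ *ᵥ c = (x - w 0).ofLp := by
    rw [Matrix.mulVec_smul, Matrix.mulVec_cramer, Matrix.det_transpose, smul_smul,
      inv_mul_cancel₀ hdet, one_smul]
  refine ⟨WithLp.toLp 2 c, fun j => ?_, by simp [Matrix.toLpLin_apply, hc]⟩
  have hupd : Function.update w j.succ x ∈ univ.pi fun _ => K := by
    intro i _
    rcases eq_or_ne i j.succ with rfl | h
    · simpa using hx
    · simpa [Function.update_of_ne h] using hw i (mem_univ i)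
  have hle : |(U.updateRow j (x - w 0).ofLp).det| ≤ |U.det| := by
    simpa [U, edgeMatrix_update_succ] using hmax hupd
  simp only [c, Pi.smul_apply, smul_eq_mul, abs_mul, abs_inv, Matrix.cramer_apply,
    Matrix.updateCol_transpose, Matrix.det_transpose]
  exact inv_mul_le_one_of_le₀ hle (abs_nonneg _)

lemma volume_le_abs_det_edgeMatrix_of_isMaxOn (hw : w ∈ univ.pi fun _ => K)
    (hmax : IsMaxOn (fun v => |(edgeMatrix v).det|) (univ.pi fun _ => K) w)
    (hdet : (edgeMatrix w).det ≠ 0) :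
    volume K ≤ ENNReal.ofReal (|(edgeMatrix w).det| * 2 ^ n) := by
  have hsub : K ⊆ w 0 +ᵥ (Matrix.toEuclideanLin (edgeMatrix w)ᵀ '' {y | ∀ i, |y i| ≤ 1}) :=
    fun x hx => ⟨x - w 0, sub_mem_image_cube_of_isMaxOn hw hmax hdet hx, by simp⟩
  calc volume K ≤ _ := measure_mono hsub
    _ = _ := by
      rw [measure_vadd, Measure.addHaar_image_linearMap, LinearMap.det_toLpLin,
        Matrix.det_transpose, EuclideanSpace.volume_setOf_abs_le, Fintype.card_fin,
        ENNReal.ofReal_mul (abs_nonneg _), ENNReal.ofReal_pow zero_le_two]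
      norm_num

end edgeMatrix

lemma maMeasure_image_homothety_centroid_le {n : ℕ} {Ω : Set (EuclideanSpace ℝ (Fin n))}
    {u : EuclideanSpace ℝ (Fin n) → ℝ} {M : ℝ} (hΩ : Convex ℝ Ω) (hM : ∀ x ∈ Ω, |u x| ≤ M)
    {w : Fin (n + 1) → EuclideanSpace ℝ (Fin n)} (hw : ∀ i, w i ∈ closure Ω)
    (hdet : (edgeMatrix w).det ≠ 0) :
    maMeasure Ω u (AffineMap.homothety (Finset.univ.centroid ℝ w) (2⁻¹ : ℝ) '' Ω)
      ≤ ENNReal.ofReal |(edgeMatrix w).det|⁻¹ * ENNReal.ofReal (8 * (n + 1) * M) ^ n := by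
  set g := Finset.univ.centroid ℝ w
  have hsub : ⋃ x ∈ AffineMap.homothety g (2⁻¹ : ℝ) '' Ω ∩ Ω, subDiff Ω u x
      ⊆ Matrix.toEuclideanLin (edgeMatrix w) ⁻¹' {y | ∀ i, |y i| ≤ 4 * M * (n + 1)} := by
    simp only [iUnion_subset_iff]
    rintro _ ⟨⟨ω, hω, rfl⟩, hx⟩ p hp i
    have ht : ∀ k, ⟪p, w k - g⟫ ≤ 4 * M := fun k =>
      inner_sub_le_of_mem_subDiff_homothety hΩ hM hω hx hp (hw k)
    have hsum : ∑ k, ⟪p, w k - g⟫ = 0 := by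
      rw [← inner_sum, sum_sub_centroid_eq_zero, inner_zero_right]
    have := abs_sub_le_card_mul_of_sum_eq_zero hsum ht i.succ 0
    rw [toEuclideanLin_edgeMatrix_apply, ← sub_sub_sub_cancel_right _ _ g, inner_sub_right]
    simpa [mul_comm] using this
  calc maMeasure Ω u _ ≤ _ := measure_mono hsub
    _ = _ := by
      rw [Measure.addHaar_preimage_linearMap _ (by simpa using hdet), LinearMap.det_toLpLin,
        EuclideanSpace.volume_setOf_abs_le, Fintype.card_fin, abs_inv]
      ring_nf

lemma le_sqrt_mul_rpow_of_le_mul_of_mul_le {n : ℕ} {lam δ M V : ℝ} (hlam : 0 < lam) (hδ : 0 < δ)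
    (hM : 0 ≤ M) (hV : 0 ≤ V) (hupper : V ≤ δ * 2 ^ n)
    (hlower : lam * (2⁻¹ ^ n * V) ≤ δ⁻¹ * (8 * (n + 1) * M) ^ n) :
    V ≤ √(4 ^ n * (8 * (n + 1)) ^ n / lam) * M ^ ((n : ℝ) / 2) := by
  have h4 : (4 : ℝ) ^ n = 2 ^ n * 2 ^ n := by rw [← mul_pow]; norm_num
  have hsq : V ^ 2 ≤ 4 ^ n * (8 * (n + 1)) ^ n / lam * M ^ n :=
    calc V ^ 2 ≤ V * (δ * 2 ^ n) := by rw [sq]; exact mul_le_mul_of_nonneg_left hupper hV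
      _ = lam * (2⁻¹ ^ n * V) * δ * 4 ^ n / lam := by rw [h4, inv_pow]; field_simp
      _ ≤ δ⁻¹ * (8 * (n + 1) * M) ^ n * δ * 4 ^ n / lam := by gcongr
      _ = 4 ^ n * (8 * (n + 1)) ^ n / lam * M ^ n := by rw [mul_pow]; field_simp
  rw [Real.rpow_div_two_eq_sqrt _ hM, Real.rpow_natCast]
  refine le_of_pow_le_pow_left₀ two_ne_zero (by positivity) ?_
  rwa [mul_pow, Real.sq_sqrt (by positivity), ← pow_mul, mul_comm n, pow_mul, Real.sq_sqrt hM]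

/-- Lemma 2.8: if the Monge–Ampère measure of a convex function `u` on a bounded
convex domain `Ω` dominates `λ` times Lebesgue measure, then
`Vol(Ω) ≤ C(λ,n) (sup_Ω |u|)^{n/2}`. -/
theorem stmt6 (n : ℕ) (lam : ℝ) (hlam : 0 < lam) :
    ∃ C : ℝ, 0 < C ∧
      ∀ (Ω : Set (EuclideanSpace ℝ (Fin n))) (u : EuclideanSpace ℝ (Fin n) → ℝ) (M : ℝ),
        IsOpen Ω → Convex ℝ Ω → Bornology.IsBounded Ω → Ω.Nonempty →
        ConvexOn ℝ Ω u →
        (∀ A : Set (EuclideanSpace ℝ (Fin n)), MeasurableSet A →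
          ENNReal.ofReal lam * volume (A ∩ Ω) ≤ maMeasure Ω u A) →
        (∀ x ∈ Ω, |u x| ≤ M) →
        (volume Ω).toReal ≤ C * M ^ ((n : ℝ) / 2) := by
  refine ⟨√(4 ^ n * (8 * (n + 1)) ^ n / lam), by positivity, ?_⟩
  intro Ω u M hopen hconv hbdd hne _ hMA hM
  have hM₀ : 0 ≤ M := (abs_nonneg _).trans (hM _ hne.some_mem)
  obtain ⟨w, hw, hmax⟩ := exists_isMaxOn_abs_det_edgeMatrix hbdd.isCompact_closure hne.closure
  have hδ := abs_det_edgeMatrix_pos_of_isMaxOn hmax (hne.mono hopen.subset_interior_closure)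
  have hdet := abs_pos.1 hδ
  have hupper : (volume Ω).toReal ≤ |(edgeMatrix w).det| * 2 ^ n :=
    ENNReal.toReal_le_of_le_ofReal (by positivity)
      ((measure_mono subset_closure).trans (volume_le_abs_det_edgeMatrix_of_isMaxOn hw hmax hdet))
  set A := AffineMap.homothety (Finset.univ.centroid ℝ w) (2⁻¹ : ℝ) '' Ω
  have hAΩ : A ⊆ Ω := by
    simpa only [hopen.interior_eq] using hconv.image_homothety_interior_subset
      (hconv.closure.centroid_mem fun i => hw i (mem_univ i)) (by norm_num) (by norm_num)
  have hA : MeasurableSet A :=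
    (AffineMap.homothety_isOpenMap _ _ (by norm_num) Ω hopen).measurableSet
  have hlower : lam * (2⁻¹ ^ n * (volume Ω).toReal)
      ≤ |(edgeMatrix w).det|⁻¹ * (8 * (n + 1) * M) ^ n := by
    have h := (hMA A hA).trans
      (maMeasure_image_homothety_centroid_le hconv hM (fun i => hw i (mem_univ i)) hdet)
    rw [inter_eq_left.2 hAΩ, Measure.addHaar_image_homothety, finrank_euclideanSpace_fin] at h
    have := ENNReal.toReal_mono (by finiteness) h
    simpa [ENNReal.toReal_ofReal, hlam.le, (by positivity : (0 : ℝ) ≤ 8 * (n + 1) * M)]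
      using this
  exact le_sqrt_mul_rpow_of_le_mul_of_mul_le hlam hδ hM₀ ENNReal.toReal_nonneg hupper hlower
end

section
/- Let Ω ⊆ ℝⁿ be a convex domain, u ∈ C(closure Ω) convex, x₀ ∈ ∂Ω, and γ an oblique vector at x₀ (i.e., x₀ + tγ ∈ Ω for small t > 0). Then the directional derivative lim_{t→0⁺} (u(x₀ + tγ) − u(x₀))/t exists (possibly −∞) and equals D_γ⁺u(x₀) := limsup_{t→0⁺} sup{p·γ : p ∈ ∂u(x₀ + tγ)}; moreover, for any C² function v touching u from above (respectively below) at x₀, one has D_γ v(x₀) ≥ (respectively ≤) this common value. -/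
/-!
Along the ray `t ↦ x₀ + t • γ` the function `u` restricts to a convex function of `t ≥ 0`,
so its difference quotients at `t = 0` decrease as `t ↓ 0` and converge in `EReal`.
A subgradient `p` at `x₀ + t • γ` satisfies `slope(0, t) ≤ ⟪p, γ⟫ ≤ slope(t, t')` for
`0 < t < t'`; letting `t ↓ 0` (continuity of `u` at `x₀`) and then `t' ↓ 0` squeezes the
`limsup` of `sup ⟪∂u, γ⟫` onto the directional derivative. Subgradients exist at interior
points by separating `(y, u y)` from the open strict epigraph. A test function touching `u`
from above (below) has larger (smaller) difference quotients along the ray, hence a larger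
(smaller) derivative in the direction `γ`.
-/

open Metric Set Filter
open scoped RealInnerProductSpace Topology

theorem ContinuousOn.isOpen_strictEpigraph {X : Type*} [TopologicalSpace X] {s : Set X}
    {u : X → ℝ} (hu : ContinuousOn u s) (hs : IsOpen s) :
    IsOpen {q : X × ℝ | q.1 ∈ s ∧ u q.1 < q.2} := by
  have hcont : ContinuousOn (fun q : X × ℝ => q.2 - u q.1) (s ×ˢ univ) :=
    continuousOn_snd.sub (hu.comp continuousOn_fst fun q hq => hq.1)
  convert hcont.isOpen_inter_preimage (hs.prod isOpen_univ) (isOpen_Ioi (a := 0)) using 1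
  ext q
  simp [sub_pos]

section Subgradient

variable {E : Type*} [NormedAddCommGroup E] [InnerProductSpace ℝ E] {s : Set E} {u : E → ℝ}

theorem subDiff_nonempty_of_forall_lt [CompleteSpace E] {y : E} (hy : y ∈ s)
    (f : E × ℝ →L[ℝ] ℝ) (hf : ∀ x ∈ s, ∀ r, u x < r → f (x, r) < f (y, u y)) :
    (subDiff s u y).Nonempty := by
  -- `f (x, r) = ℓ x + r * c` with `c < 0`, and `-ℓ / c` is then a subgradient at `y`.
  set ℓ := f.comp (ContinuousLinearMap.inl ℝ E ℝ)
  set c := f (0, 1)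
  have hf_apply : ∀ x r, f (x, r) = ℓ x + r * c := fun x r => by
    rw [← f.comp_inl_add_comp_inr]
    simpa [ℓ, c] using f.map_smul r ((0 : E), (1 : ℝ))
  have hc : 0 < -c := by
    have := hf y hy (u y + 1) (lt_add_one _)
    rw [hf_apply, hf_apply] at this
    linarith
  refine ⟨(InnerProductSpace.toDual ℝ E).symm ((-c)⁻¹ • ℓ), fun x hx => ?_⟩
  rw [InnerProductSpace.toDual_symm_apply]
  change u y + (-c)⁻¹ * ℓ (x - y) ≤ u x
  refine le_of_forall_gt_imp_ge_of_dense fun r hr => ?_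
  have hsep := hf x hx r hr
  rw [hf_apply, hf_apply] at hsep
  have hℓ : ℓ (x - y) ≤ -c * (r - u y) := by rw [map_sub]; linarith
  linarith [(inv_mul_le_iff₀ hc).2 hℓ]

theorem ConvexOn.subDiff_nonempty [CompleteSpace E] (hu : ConvexOn ℝ s u)
    (hcont : ContinuousOn u s) (hs : IsOpen s) {y : E} (hy : y ∈ s) :
    (subDiff s u y).Nonempty := by
  obtain ⟨f, hf⟩ := geometric_hahn_banach_open_point hu.convex_strict_epigraph
    (hcont.isOpen_strictEpigraph hs) (x := (y, u y)) fun h => lt_irrefl _ h.2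
  exact subDiff_nonempty_of_forall_lt hy f fun x hx r hr => hf (x, r) ⟨hx, hr⟩

theorem subDiff_subset_subDiff_closure (hu : ContinuousOn u (closure s)) (y : E) :
    subDiff s u y ⊆ subDiff (closure s) u y := fun p hp x hx =>
  ContinuousWithinAt.closure_le hx (by fun_prop)
    ((hu x hx).mono subset_closure) hp

theorem ConvexOn.subDiff_closure_nonempty [CompleteSpace E] (hu : ConvexOn ℝ (closure s) u)
    (hcont : ContinuousOn u (closure s)) (hs : IsOpen s) (hsc : Convex ℝ s) {y : E}
    (hy : y ∈ s) :
    (subDiff (closure s) u y).Nonempty :=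
  ((hu.subset subset_closure hsc).subDiff_nonempty (hcont.mono subset_closure) hs hy).mono
    (subDiff_subset_subDiff_closure hcont y)

end Subgradient

section Slope

variable {g : ℝ → ℝ} {a b : ℝ}

theorem ConvexOn.exists_tendsto_slope_nhdsGT (hg : ConvexOn ℝ (Ico a b) g) (hab : a < b) :
    ∃ l : EReal, Tendsto (fun t => (slope g a t : EReal)) (𝓝[>] a) (𝓝 l) := by
  have hmono : MonotoneOn (fun t => (slope g a t : EReal)) (Ioo a b) := fun x hx y hy hxy =>
    EReal.coe_le_coe <| hg.slope_mono (left_mem_Ico.2 hab)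
      ⟨Ioo_subset_Ico_self hx, hx.1.ne'⟩ ⟨Ioo_subset_Ico_self hy, hy.1.ne'⟩ hxy
  exact ⟨_, hmono.tendsto_nhdsWithin_Ioo_right (nonempty_Ioo.2 hab) (OrderBot.bddBelow _)⟩

theorem ContinuousWithinAt.tendsto_slope_left {s : Set ℝ} (hg : ContinuousWithinAt g s a)
    (hb : b ≠ a) : Tendsto (fun t => slope g t b) (𝓝[s] a) (𝓝 (slope g a b)) := by
  simp_rw [slope_def_field]
  exact (tendsto_const_nhds.sub hg).div
    (tendsto_const_nhds.sub (tendsto_id.mono_left nhdsWithin_le_nhds)) (sub_ne_zero.2 hb)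

theorem limsup_nhdsGT_le_of_le_slope {S : ℝ → EReal} {l : EReal} (hab : a < b)
    (hg : ContinuousWithinAt g (Ioi a) a)
    (hS : ∀ t ∈ Ioo a b, ∀ t' ∈ Ioo t b, S t ≤ slope g t t')
    (hl : Tendsto (fun t => (slope g a t : EReal)) (𝓝[>] a) (𝓝 l)) :
    limsup S (𝓝[>] a) ≤ l := by
  refine ge_of_tendsto hl ?_
  filter_upwards [Ioo_mem_nhdsGT hab] with t' ht'
  calc limsup S (𝓝[>] a) ≤ limsup (fun t => (slope g t t' : EReal)) (𝓝[>] a) := by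
        refine limsup_le_limsup ?_
        filter_upwards [Ioo_mem_nhdsGT ht'.1] with t ht
        exact hS t ⟨ht.1, ht.2.trans ht'.2⟩ t' ⟨ht.2, ht'.2⟩
    _ = slope g a t' := (EReal.tendsto_coe.2 (hg.tendsto_slope_left ht'.1.ne')).limsup_eq

end Slope

section Ray

variable {E : Type*} [NormedAddCommGroup E] [InnerProductSpace ℝ E] {s : Set E} {u : E → ℝ}
  {x₀ γ p : E} {t t' : ℝ}

noncomputable def sSupInnerSubDiff (s : Set E) (u : E → ℝ) (y γ : E) : EReal :=
  sSup {r : EReal | ∃ p ∈ subDiff s u y, r = ((⟪p, γ⟫ : ℝ) : EReal)}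

theorem ConvexOn.comp_add_smul (hu : ConvexOn ℝ s u) :
    ConvexOn ℝ {t : ℝ | x₀ + t • γ ∈ s} (fun t => u (x₀ + t • γ)) := by
  have hline : (AffineMap.lineMap x₀ (x₀ + γ) : ℝ → E) = fun t => x₀ + t • γ := by
    ext t; simp [AffineMap.lineMap_apply, add_comm]
  have := hu.comp_affineMap (AffineMap.lineMap x₀ (x₀ + γ))
  rwa [hline] at this

theorem sub_mul_inner_le_of_mem_subDiff (hp : p ∈ subDiff s u (x₀ + t • γ))
    (ht' : x₀ + t' • γ ∈ s) : (t' - t) * ⟪p, γ⟫ ≤ u (x₀ + t' • γ) - u (x₀ + t • γ) := by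
  have h := hp _ ht'
  rw [show x₀ + t' • γ - (x₀ + t • γ) = (t' - t) • γ by rw [sub_smul]; abel,
    real_inner_smul_right] at h
  linarith

theorem inner_le_slope_of_mem_subDiff (hp : p ∈ subDiff s u (x₀ + t • γ))
    (ht' : x₀ + t' • γ ∈ s) (htt' : t < t') :
    ⟪p, γ⟫ ≤ slope (fun τ => u (x₀ + τ • γ)) t t' := by
  rw [slope_def_field, le_div_iff₀ (sub_pos.2 htt'), mul_comm]
  exact sub_mul_inner_le_of_mem_subDiff hp ht'

theorem slope_le_inner_of_mem_subDiff (hp : p ∈ subDiff s u (x₀ + t • γ))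
    (ht' : x₀ + t' • γ ∈ s) (htt' : t' < t) :
    slope (fun τ => u (x₀ + τ • γ)) t' t ≤ ⟪p, γ⟫ := by
  rw [slope_def_field, div_le_iff₀ (sub_pos.2 htt')]
  linarith [sub_mul_inner_le_of_mem_subDiff hp ht']

theorem sSupInnerSubDiff_le_slope (ht' : x₀ + t' • γ ∈ s) (htt' : t < t') :
    sSupInnerSubDiff s u (x₀ + t • γ) γ ≤ slope (fun τ => u (x₀ + τ • γ)) t t' := by
  refine sSup_le ?_
  rintro _ ⟨p, hp, rfl⟩
  exact EReal.coe_le_coe (inner_le_slope_of_mem_subDiff hp ht' htt')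

theorem slope_le_sSupInnerSubDiff (hne : (subDiff s u (x₀ + t • γ)).Nonempty)
    (ht' : x₀ + t' • γ ∈ s) (htt' : t' < t) :
    slope (fun τ => u (x₀ + τ • γ)) t' t ≤ sSupInnerSubDiff s u (x₀ + t • γ) γ := by
  obtain ⟨p, hp⟩ := hne
  exact (EReal.coe_le_coe (slope_le_inner_of_mem_subDiff hp ht' htt')).trans
    (le_sSup ⟨p, hp, rfl⟩)

theorem tendsto_add_smul_nhdsWithin {ε : ℝ} (hε : 0 < ε)
    (hmem : ∀ t ∈ Ioo 0 ε, x₀ + t • γ ∈ s) :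
    Tendsto (fun t : ℝ => x₀ + t • γ) (𝓝[>] 0) (𝓝[s] x₀) := by
  refine tendsto_nhdsWithin_iff.2 ⟨?_, eventually_of_mem (Ioo_mem_nhdsGT hε) hmem⟩
  have : Continuous fun t : ℝ => x₀ + t • γ := by fun_prop
  simpa using (this.tendsto 0).mono_left nhdsWithin_le_nhds

theorem add_smul_mem_closure {ε : ℝ} (hε : 0 < ε) (hmem : ∀ t ∈ Ioo 0 ε, x₀ + t • γ ∈ s)
    (ht : t ∈ Ico 0 ε) : x₀ + t • γ ∈ closure s := by
  rcases ht.1.eq_or_lt with rfl | ht₀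
  · simpa using mem_closure_iff_nhdsWithin_neBot.2 (tendsto_add_smul_nhdsWithin hε hmem).neBot
  · exact subset_closure (hmem t ⟨ht₀, ht.2⟩)

theorem limsup_sSupInnerSubDiff_eq {ε : ℝ} {l : EReal} (hε : 0 < ε)
    (hseg : ∀ t ∈ Ico 0 ε, x₀ + t • γ ∈ s)
    (hne : ∀ t ∈ Ioo 0 ε, (subDiff s u (x₀ + t • γ)).Nonempty)
    (hcont : ContinuousWithinAt u s x₀)
    (hray : Tendsto (fun t : ℝ => x₀ + t • γ) (𝓝[>] 0) (𝓝[s] x₀))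
    (hl : Tendsto (fun t : ℝ => (slope (fun τ => u (x₀ + τ • γ)) 0 t : EReal)) (𝓝[>] 0)
      (𝓝 l)) :
    limsup (fun t : ℝ => sSupInnerSubDiff s u (x₀ + t • γ) γ) (𝓝[>] 0) = l := by
  have hx₀ : x₀ + (0 : ℝ) • γ ∈ s := hseg 0 ⟨le_rfl, hε⟩
  have hu₀ : ContinuousWithinAt (fun τ : ℝ => u (x₀ + τ • γ)) (Ioi 0) 0 := by
    simpa [ContinuousWithinAt, Function.comp_def] using hcont.tendsto.comp hray
  refine le_antisymm ?_ ?_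
  · exact limsup_nhdsGT_le_of_le_slope hε hu₀ (fun t ht t' ht' =>
      sSupInnerSubDiff_le_slope (hseg t' ⟨(ht.1.trans ht'.1).le, ht'.2⟩) ht'.1) hl
  · rw [← hl.limsup_eq]
    refine limsup_le_limsup ?_
    filter_upwards [Ioo_mem_nhdsGT hε] with t ht
    exact slope_le_sSupInnerSubDiff (hne t ht) hx₀ ht.1

theorem HasFDerivWithinAt.tendsto_slope_add_smul {φ : E → ℝ} {φ' : E →L[ℝ] ℝ}
    (hφ : HasFDerivWithinAt φ φ' s x₀) (hray : ∀ᶠ t in 𝓝[>] (0 : ℝ), x₀ + t • γ ∈ s) :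
    Tendsto (fun t => slope (fun τ => φ (x₀ + τ • γ)) 0 t) (𝓝[>] (0 : ℝ)) (𝓝 (φ' γ)) := by
  have hd : Tendsto (fun t : ℝ => t • γ) (𝓝[>] 0) (𝓝 0) := by
    simpa using (tendsto_id.smul_const γ).mono_left (nhdsWithin_le_nhds (a := (0 : ℝ)))
  have hcd : Tendsto (fun t : ℝ => t⁻¹ • t • γ) (𝓝[>] 0) (𝓝 γ) :=
    tendsto_const_nhds.congr' <| eventually_nhdsWithin_of_forall fun t (ht : 0 < t) => by
      simp [smul_smul, inv_mul_cancel₀ ht.ne']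
  simpa [slope_def_module] using hφ.lim hd hray hcd

theorem le_of_tendsto_slope_of_eventually_le {f g : E → ℝ} {a b : EReal}
    (hray : Tendsto (fun t : ℝ => x₀ + t • γ) (𝓝[>] 0) (𝓝[s] x₀))
    (hf : Tendsto (fun t : ℝ => (slope (fun τ => f (x₀ + τ • γ)) 0 t : EReal)) (𝓝[>] 0)
      (𝓝 a))
    (hg : Tendsto (fun t : ℝ => (slope (fun τ => g (x₀ + τ • γ)) 0 t : EReal)) (𝓝[>] 0)
      (𝓝 b))
    (hle : ∀ᶠ x in 𝓝[s] x₀, f x ≤ g x) (heq : f x₀ = g x₀) : a ≤ b := by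
  refine le_of_tendsto_of_tendsto hf hg ?_
  filter_upwards [hray.eventually hle, self_mem_nhdsWithin] with t hfg (ht : 0 < t)
  simp only [slope_def_field, zero_smul, add_zero, sub_zero, heq]
  gcongr

end Ray

theorem stmt11_general (n : ℕ) (Ω : Set (EuclideanSpace ℝ (Fin n)))
    (u : EuclideanSpace ℝ (Fin n) → ℝ) (x₀ γ : EuclideanSpace ℝ (Fin n))
    (hΩo : IsOpen Ω) (hΩc : Convex ℝ Ω)
    (hcvx : ConvexOn ℝ (closure Ω) u) (hcont : ContinuousOn u (closure Ω))
    (hγ : ∃ ε : ℝ, 0 < ε ∧ ∀ t ∈ Ioo (0 : ℝ) ε, x₀ + t • γ ∈ Ω) :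
    ∃ l : EReal,
      Tendsto (fun t : ℝ => (((u (x₀ + t • γ) - u x₀) / t : ℝ) : EReal))
        (𝓝[>] (0 : ℝ)) (𝓝 l) ∧
      l = limsup (fun t : ℝ =>
          sSup {r : EReal | ∃ p ∈ subDiff (closure Ω) u (x₀ + t • γ),
            r = ((⟪p, γ⟫ : ℝ) : EReal)}) (𝓝[>] (0 : ℝ)) ∧
      (∀ φ : EuclideanSpace ℝ (Fin n) → ℝ, ContDiffOn ℝ 2 φ (closure Ω) →
        (∀ᶠ x in 𝓝[closure Ω] x₀, u x ≤ φ x) → φ x₀ = u x₀ →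
        l ≤ ((fderivWithin ℝ φ (closure Ω) x₀ γ : ℝ) : EReal)) ∧
      (∀ φ : EuclideanSpace ℝ (Fin n) → ℝ, ContDiffOn ℝ 2 φ (closure Ω) →
        (∀ᶠ x in 𝓝[closure Ω] x₀, φ x ≤ u x) → φ x₀ = u x₀ →
        ((fderivWithin ℝ φ (closure Ω) x₀ γ : ℝ) : EReal) ≤ l) := by
  obtain ⟨ε, hε, hmem⟩ := hγ
  have hseg : ∀ t ∈ Ico 0 ε, x₀ + t • γ ∈ closure Ω := fun _ => add_smul_mem_closure hε hmem
  have hx₀ : x₀ ∈ closure Ω := by simpa using hseg 0 ⟨le_rfl, hε⟩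
  have hray :=
    (tendsto_add_smul_nhdsWithin hε hmem).mono_right (nhdsWithin_mono _ subset_closure)
  obtain ⟨l, hl⟩ :=
    (hcvx.comp_add_smul.subset hseg (convex_Ico 0 ε)).exists_tendsto_slope_nhdsGT hε
  have hslope : ∀ t, (u (x₀ + t • γ) - u x₀) / t = slope (fun τ => u (x₀ + τ • γ)) 0 t := by
    simp [slope_def_field]
  simp_rw [hslope]
  have hderiv : ∀ φ : EuclideanSpace ℝ (Fin n) → ℝ, ContDiffOn ℝ 2 φ (closure Ω) → Tendsto
      (fun t : ℝ => (slope (fun τ => φ (x₀ + τ • γ)) 0 t : EReal)) (𝓝[>] 0)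
      (𝓝 (fderivWithin ℝ φ (closure Ω) x₀ γ : EReal)) := fun φ hφ =>
    EReal.tendsto_coe.2 <| ((hφ.differentiableOn (by norm_num)) x₀ hx₀).hasFDerivWithinAt
      |>.tendsto_slope_add_smul (hray.eventually self_mem_nhdsWithin)
  refine ⟨l, hl, (limsup_sSupInnerSubDiff_eq hε hseg
      (fun t ht => hcvx.subDiff_closure_nonempty hcont hΩo hΩc (hmem t ht))
      (hcont x₀ hx₀) hray hl).symm,
    fun φ hφ hle heq => le_of_tendsto_slope_of_eventually_le hray hl (hderiv φ hφ) hle heq.symm,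
    fun φ hφ hle heq => le_of_tendsto_slope_of_eventually_le hray (hderiv φ hφ) hl hle heq⟩

/-- Lemma 3.5: for a continuous convex function on the closure of a convex domain
and an oblique direction `γ` at a boundary point `x₀`, the one-sided directional
derivative exists (as an extended real), equals the Dini-type derivative
`D_γ⁺u(x₀) = limsup_{t→0⁺} sup{p·γ : p ∈ ∂u(x₀+tγ)}`, and any `C²` function
touching `u` from above (resp. below) at `x₀` has oblique derivative at least
(resp. at most) this common value. -/
theorem stmt11 (n : ℕ) (Ω : Set (EuclideanSpace ℝ (Fin n)))
    (u : EuclideanSpace ℝ (Fin n) → ℝ) (x₀ γ : EuclideanSpace ℝ (Fin n))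
    (hΩo : IsOpen Ω) (hΩc : Convex ℝ Ω) (hne : Ω.Nonempty)
    (hx₀ : x₀ ∈ frontier Ω)
    (hcvx : ConvexOn ℝ (closure Ω) u) (hcont : ContinuousOn u (closure Ω))
    (hγ : ∃ ε : ℝ, 0 < ε ∧ ∀ t ∈ Ioo (0 : ℝ) ε, x₀ + t • γ ∈ Ω) :
    ∃ l : EReal,
      Tendsto (fun t : ℝ => (((u (x₀ + t • γ) - u x₀) / t : ℝ) : EReal))
        (𝓝[>] (0 : ℝ)) (𝓝 l) ∧
      l = limsup (fun t : ℝ =>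
          sSup {r : EReal | ∃ p ∈ subDiff (closure Ω) u (x₀ + t • γ),
            r = ((⟪p, γ⟫ : ℝ) : EReal)}) (𝓝[>] (0 : ℝ)) ∧
      (∀ φ : EuclideanSpace ℝ (Fin n) → ℝ, ContDiffOn ℝ 2 φ (closure Ω) →
        (∀ᶠ x in 𝓝[closure Ω] x₀, u x ≤ φ x) → φ x₀ = u x₀ →
        l ≤ ((fderivWithin ℝ φ (closure Ω) x₀ γ : ℝ) : EReal)) ∧
      (∀ φ : EuclideanSpace ℝ (Fin n) → ℝ, ContDiffOn ℝ 2 φ (closure Ω) →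
        (∀ᶠ x in 𝓝[closure Ω] x₀, φ x ≤ u x) → φ x₀ = u x₀ →
        ((fderivWithin ℝ φ (closure Ω) x₀ γ : ℝ) : EReal) ≤ l) :=
  stmt11_general n Ω u x₀ γ hΩo hΩc hcvx hcont hγ
end
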